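/- arXiv:2409.02949 — 4 statements merged into one kernel-verified Lean document; each statement's English description precedes it below -/
import Mathlib

section
/- The integral ∫₀¹ (1 - e^{-t} - e^{-1/t})/t dt equals the Euler–Mascheroni constant γ. -/
/-!
Since `Γ'(1) = -γ` and `Γ'(1) = ∫₀^∞ log t · e^{-t} dt`, it suffices to evaluate the
latter integral. Split it at `1` and integrate by parts on both pieces: against the
antiderivative `1 - e^{-t}` of `e^{-t}` on `(0, 1]`, which gives `-∫₀¹ (1 - e^{-t})/t dt`,
and against `-e^{-t}` on `(1, ∞)`, which gives `∫₁^∞ e^{-t}/t dt`; in both cases the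
boundary terms vanish. The substitution `t ↦ 1/t` turns the last integral into
`∫₀¹ e^{-1/t}/t dt`.
-/

open MeasureTheory Set Real Filter Topology

theorem integral_log_mul_exp_neg_Ioi :
    ∫ t in Ioi (0:ℝ), log t * exp (-t) = -eulerMascheroniConstant := by
  have hGamma : Complex.Gamma =ᶠ[𝓝 1] Complex.GammaIntegral := by
    filter_upwards [Complex.continuous_re.isOpen_preimage _ isOpen_Ioi |>.mem_nhds
      (by simp : (1:ℂ) ∈ Complex.re ⁻¹' Ioi 0)] with s hs using Complex.Gamma_eq_integral hs
  have h := (Complex.hasDerivAt_GammaIntegral (s := 1) (by simp)).congr_of_eventuallyEq hGamma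
  have := h.unique Complex.hasDerivAt_Gamma_one
  simp only [sub_self, Complex.cpow_zero, one_mul, ← Complex.ofReal_mul] at this
  exact_mod_cast this

theorem integrableOn_log_mul_exp_neg_Ioi :
    IntegrableOn (fun t : ℝ => log t * exp (-t)) (Ioi 0) := by
  rw [← Ioc_union_Ioi_eq_Ioi zero_le_one]
  refine IntegrableOn.union ?_ ?_
  · exact (intervalIntegral.intervalIntegrable_log'.mul_continuousOn (by fun_prop)).1
  · have hdom := (integrableOn_rpow_mul_exp_neg_rpow (s := 1) (p := 1) (by norm_num)
      one_pos).mono_set (Ioi_subset_Ioi zero_le_one)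
    simp only [rpow_one] at hdom
    refine hdom.mono' (by fun_prop : Measurable _).aestronglyMeasurable ?_
    filter_upwards [ae_restrict_mem measurableSet_Ioi] with t (ht : 1 < t)
    rw [norm_mul, norm_of_nonneg (log_nonneg ht.le), norm_of_nonneg (exp_nonneg _)]
    gcongr
    exact (log_le_sub_one_of_pos (by linarith)).trans (by linarith)

theorem integrableOn_one_sub_exp_neg_div_Ioc :
    IntegrableOn (fun t : ℝ => (1 - exp (-t)) / t) (Ioc 0 1) := by
  refine Measure.integrableOn_of_bounded (M := 1) measure_Ioc_lt_top.ne
    (by fun_prop : Measurable _).aestronglyMeasurable ?_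
  filter_upwards [ae_restrict_mem measurableSet_Ioc] with t ht
  rw [norm_of_nonneg (div_nonneg (by simp [ht.1.le]) ht.1.le), div_le_one ht.1]
  linarith [one_sub_le_exp_neg t]

theorem integrableOn_exp_neg_one_div_div_Ioc :
    IntegrableOn (fun t : ℝ => exp (-1 / t) / t) (Ioc 0 1) := by
  refine Measure.integrableOn_of_bounded (M := 1) measure_Ioc_lt_top.ne
    (by fun_prop : Measurable _).aestronglyMeasurable ?_
  filter_upwards [ae_restrict_mem measurableSet_Ioc] with t ht
  rw [norm_of_nonneg (div_nonneg (exp_nonneg _) ht.1.le), div_eq_mul_inv, mul_comm, neg_div,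
    one_div]
  exact (mul_exp_neg_le_exp_neg_one _).trans (exp_le_one_iff.2 (by norm_num))

theorem integrableOn_exp_neg_div_Ioi_one :
    IntegrableOn (fun t : ℝ => exp (-t) / t) (Ioi 1) := by
  refine (exp_neg_integrableOn_Ioi 1 one_pos).mono'
    (by fun_prop : Measurable _).aestronglyMeasurable ?_
  filter_upwards [ae_restrict_mem measurableSet_Ioi] with t (ht : 1 < t)
  rw [norm_of_nonneg (by positivity), neg_one_mul]
  exact div_le_self (exp_nonneg _) ht.le

theorem integral_comp_inv_div_Ioc_zero_one (f : ℝ → ℝ) :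
    ∫ t in Ioc (0:ℝ) 1, f t⁻¹ / t = ∫ u in Ioi (1:ℝ), f u / u := by
  have himage : Inv.inv '' Ioi (1:ℝ) = Ioo 0 1 := by
    rw [image_inv_eq_inv, inv_Ioi₀ zero_lt_one, inv_one]
  rw [integral_Ioc_eq_integral_Ioo, ← himage,
    integral_image_eq_integral_abs_deriv_smul measurableSet_Ioi
      (fun u hu => (hasDerivAt_inv (zero_lt_one.trans hu).ne').hasDerivWithinAt)
      inv_injective.injOn]
  refine setIntegral_congr_fun measurableSet_Ioi fun u hu => ?_
  have hu0 : u ≠ 0 := (zero_lt_one.trans hu).ne'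
  simp only [abs_neg, abs_inv, abs_pow, sq_abs, inv_inv, smul_eq_mul]
  field_simp

theorem tendsto_one_sub_exp_neg_mul_log_nhdsGT_zero :
    Tendsto (fun t : ℝ => (1 - exp (-t)) * log t) (𝓝[>] 0) (𝓝 0) := by
  have hlog : Tendsto (fun t : ℝ => t * log t) (𝓝[>] 0) (𝓝 0) := by
    simpa [mul_comm] using tendsto_log_mul_rpow_nhdsGT_zero one_pos
  refine squeeze_zero_norm' ?_ (by simpa using hlog.norm)
  filter_upwards [self_mem_nhdsWithin] with t (ht : 0 < t)
  rw [Real.norm_eq_abs, abs_mul, abs_of_nonneg (by simp [ht.le] : 0 ≤ 1 - exp (-t)),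
    abs_of_pos ht]
  gcongr
  linarith [one_sub_le_exp_neg t]

theorem integral_one_sub_exp_neg_div_Ioc :
    ∫ t in Ioc (0:ℝ) 1, (1 - exp (-t)) / t = -∫ t in Ioc (0:ℝ) 1, log t * exp (-t) := by
  have hlog : IntegrableOn (fun t => log t * exp (-t)) (Ioc 0 1) :=
    integrableOn_log_mul_exp_neg_Ioi.mono_set Ioc_subset_Ioi_self
  have hFTC : ∫ t in (0:ℝ)..1, (log t * exp (-t) + (1 - exp (-t)) / t) = 0 - 0 := by
    refine intervalIntegral.integral_eq_sub_of_hasDerivAt_of_tendsto zero_lt_one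
      (f := fun t => (1 - exp (-t)) * log t) (fun t ht => ?_) ?_
      tendsto_one_sub_exp_neg_mul_log_nhdsGT_zero ?_
    · exact (((hasDerivAt_neg t).exp.const_sub 1).fun_mul (hasDerivAt_log ht.1.ne')).congr_deriv
        (by ring)
    · exact (intervalIntegrable_iff_integrableOn_Ioc_of_le zero_le_one).2
        (hlog.add integrableOn_one_sub_exp_neg_div_Ioc)
    · have hc : ContinuousAt (fun t : ℝ => (1 - exp (-t)) * log t) 1 := by
        fun_prop (disch := norm_num)
      simpa using hc.tendsto.mono_left nhdsWithin_le_nhds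
  rw [intervalIntegral.integral_of_le zero_le_one,
    integral_add hlog integrableOn_one_sub_exp_neg_div_Ioc] at hFTC
  linarith

theorem tendsto_log_mul_exp_neg_atTop :
    Tendsto (fun t : ℝ => log t * exp (-t)) atTop (𝓝 0) := by
  have htop := tendsto_pow_mul_exp_neg_atTop_nhds_zero 1
  simp only [pow_one] at htop
  refine tendsto_of_tendsto_of_tendsto_of_le_of_le' tendsto_const_nhds htop ?_ ?_
  · filter_upwards [eventually_ge_atTop 1] with t ht
    exact mul_nonneg (log_nonneg ht) (exp_nonneg _)
  · filter_upwards [eventually_gt_atTop 0] with t ht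
    gcongr
    exact (log_le_sub_one_of_pos ht).trans (by linarith)

theorem integral_log_mul_exp_neg_Ioi_one :
    ∫ t in Ioi (1:ℝ), log t * exp (-t) = ∫ t in Ioi (1:ℝ), exp (-t) / t := by
  have h := integral_Ioi_mul_deriv_eq_deriv_mul (a := 1) (a' := 0) (b' := 0)
    (u := log) (v := fun t => -exp (-t)) (u' := fun t => t⁻¹) (v' := fun t => exp (-t))
    (fun t ht => hasDerivAt_log (zero_lt_one.trans ht).ne')
    (fun t _ => ((hasDerivAt_neg t).exp.neg).congr_deriv (by simp))
    (integrableOn_log_mul_exp_neg_Ioi.mono_set (Ioi_subset_Ioi zero_le_one))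
    (integrableOn_exp_neg_div_Ioi_one.neg.congr_fun (fun t _ => by simp [div_eq_inv_mul])
      measurableSet_Ioi) ?_ (by simpa [Pi.mul_def] using tendsto_log_mul_exp_neg_atTop.neg)
  · simp [h, integral_neg, div_eq_inv_mul]
  · have hc : ContinuousAt (fun t : ℝ => log t * -exp (-t)) 1 := by
      fun_prop (disch := norm_num)
    simpa [Pi.mul_def] using hc.tendsto.mono_left nhdsWithin_le_nhds

theorem stmt_0 :
    ∫ t in (0:ℝ)..1, (1 - Real.exp (-t) - Real.exp (-1/t)) / t
      = Real.eulerMascheroniConstant := by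
  have hsplit : ∫ t in Ioi (0:ℝ), log t * exp (-t)
      = (∫ t in Ioc (0:ℝ) 1, log t * exp (-t)) + ∫ t in Ioi (1:ℝ), log t * exp (-t) := by
    rw [← Ioc_union_Ioi_eq_Ioi zero_le_one]
    exact setIntegral_union (Ioc_disjoint_Ioi le_rfl) measurableSet_Ioi
      (integrableOn_log_mul_exp_neg_Ioi.mono_set Ioc_subset_Ioi_self)
      (integrableOn_log_mul_exp_neg_Ioi.mono_set (Ioi_subset_Ioi zero_le_one))
  have hinv : ∫ t in Ioc (0:ℝ) 1, exp (-1 / t) / t = ∫ u in Ioi (1:ℝ), exp (-u) / u := by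
    simpa only [neg_div, one_div] using integral_comp_inv_div_Ioc_zero_one (fun u => exp (-u))
  simp_rw [intervalIntegral.integral_of_le zero_le_one, sub_div (1 - exp _) (exp _)]
  rw [integral_sub integrableOn_one_sub_exp_neg_div_Ioc integrableOn_exp_neg_one_div_div_Ioc,
    hinv, integral_one_sub_exp_neg_div_Ioc, ← integral_log_mul_exp_neg_Ioi_one]
  linarith [integral_log_mul_exp_neg_Ioi]
end

section
/- For every integer n > 0, ∑_{k=0}^{n} C(n,k) · H_k · (-1)^{k+1} = 1/n. -/
/-!
Pascal's rule turns `∑ₖ C(n+1,k) f(k)` into `∑ₖ C(n,k) (f(k) + f(k+1))`. For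
`f(k) = (-1)^(k+1) H_k` the consecutive terms nearly cancel, `f(k) + f(k+1) = (-1)^k / (k+1)`, and
`∑ₖ C(n,k) (-1)^k / (k+1) = 1/(n+1)` follows from `C(n,k) / (k+1) = C(n+1,k+1) / (n+1)` and the
vanishing of the alternating sum of binomial coefficients.
-/

open Finset

theorem sum_range_succ_choose_mul {R : Type*} [CommSemiring R] (n : ℕ) (f : ℕ → R) :
    ∑ k ∈ range (n + 2), ((n + 1).choose k : R) * f k =
      ∑ k ∈ range (n + 1), (n.choose k : R) * (f k + f (k + 1)) := by
  simp only [mul_add, sum_add_distrib]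
  rw [sum_range_succ', sum_range_succ' (fun k => (n.choose k : R) * f k)]
  simp only [Nat.choose_succ_succ', Nat.cast_add, add_mul, sum_add_distrib]
  rw [sum_range_succ (fun k => (n.choose (k + 1) : R) * f (k + 1))]
  simp only [Nat.choose_succ_self, Nat.choose_zero_right, Nat.cast_zero, zero_mul, add_zero]
  ring

theorem sum_range_neg_one_pow_mul_choose_succ {R : Type*} [CommRing R] (n : ℕ) :
    ∑ k ∈ range (n + 1), (-1 : R) ^ k * ((n + 1).choose (k + 1) : R) = 1 := by
  have h := congrArg (Int.cast : ℤ → R) (Int.alternating_sum_range_choose_of_ne n.succ_ne_zero)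
  push_cast at h
  rw [sum_range_succ'] at h
  simp only [pow_succ, mul_neg_one, neg_mul, sum_neg_distrib, pow_zero, Nat.choose_zero_right,
    Nat.cast_one, one_mul, Nat.succ_eq_add_one] at h
  linear_combination -h

theorem sum_range_choose_mul_neg_one_pow_div {K : Type*} [Field K] [CharZero K] (n : ℕ) :
    ∑ k ∈ range (n + 1), (n.choose k : K) * ((-1) ^ k / (k + 1)) = 1 / (n + 1) := by
  have hn : (n : K) + 1 ≠ 0 := Nat.cast_add_one_ne_zero n
  have hterm : ∀ k ∈ range (n + 1),
      (n.choose k : K) * ((-1) ^ k / (k + 1)) = (-1) ^ k * ((n + 1).choose (k + 1) : K) / (n + 1) := by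
    intro k _
    have hk : (k : K) + 1 ≠ 0 := Nat.cast_add_one_ne_zero k
    have h : ((n : K) + 1) * n.choose k = (n + 1).choose (k + 1) * (k + 1) := by
      exact_mod_cast Nat.add_one_mul_choose_eq n k
    field_simp
    linear_combination h
  rw [sum_congr rfl hterm, ← sum_div, sum_range_neg_one_pow_mul_choose_succ]

theorem harmonic_mul_neg_one_pow_add_succ {K : Type*} [Field K] [CharZero K] (k : ℕ) :
    (harmonic k : K) * (-1) ^ (k + 1) + (harmonic (k + 1) : K) * (-1) ^ (k + 1 + 1) =
      (-1) ^ k / (k + 1) := by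
  rw [harmonic_succ]
  push_cast
  ring

theorem stmt_7 (n : ℕ) (hn : 0 < n) :
    ∑ k ∈ Finset.range (n + 1),
        (n.choose k : ℝ) * (harmonic k : ℝ) * (-1) ^ (k + 1) = 1 / n := by
  obtain ⟨m, rfl⟩ := Nat.exists_eq_add_one_of_ne_zero hn.ne'
  simp only [mul_assoc, sum_range_succ_choose_mul, harmonic_mul_neg_one_pow_add_succ]
  rw [sum_range_choose_mul_neg_one_pow_div, Nat.cast_add_one]
end

section
/- For every real x, the Cauchy product identity e^x · ∑_{n≥0} (-1)^{n+1} H_n xⁿ/n! = ∑_{n≥1} xⁿ/(n·n!) holds, both series converging absolutely. -/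
/-!
Multiplying the two exponential generating functions, the coefficient of `xⁿ / n!` in the Cauchy
product is the binomial transform `∑ₖ (n choose k) (-1)^(k+1) H_k`. Pascal's rule turns this
transform into the one of the forward differences `H_{k+1} - H_k = 1 / (k + 1)`, and
`∑ₖ (-1)^k (n choose k) / (k + 1) = 1 / (n + 1)` because `(n choose k) / (k + 1)` equals
`(n + 1 choose k + 1) / (n + 1)`. Absolute convergence holds since both coefficient sequences grow
at most exponentially.
-/

open Finset Nat

lemma sum_range_neg_one_pow_mul_choose_succ_mul {R : Type*} [CommRing R] (f : ℕ → R) (n : ℕ) :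
    ∑ k ∈ range (n + 2), (-1) ^ k * ((n + 1).choose k : R) * f k
      = ∑ k ∈ range (n + 1), (-1) ^ k * (n.choose k : R) * (f k - f (k + 1)) := by
  have shift := sum_range_succ' (fun k => (-1) ^ k * (n.choose k : R) * f k) (n + 1)
  rw [sum_range_succ, choose_succ_self, cast_zero, mul_zero, zero_mul, add_zero] at shift
  simp only [mul_sub, sum_sub_distrib, shift, sum_range_succ' _ (n + 1), choose_succ_succ,
    cast_add, mul_add, add_mul, sum_add_distrib, pow_succ, mul_neg_one, neg_mul, sum_neg_distrib,
    choose_zero_right]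
  ring

lemma sum_range_neg_one_pow_mul_choose_div_succ {K : Type*} [Field K] [CharZero K] (n : ℕ) :
    ∑ k ∈ range (n + 1), (-1) ^ k * (n.choose k : K) / (k + 1) = 1 / (n + 1) := by
  have absorb (k : ℕ) : (n.choose k : K) / (k + 1) = ((n + 1).choose (k + 1) : K) / (n + 1) := by
    rw [div_eq_div_iff k.cast_add_one_ne_zero n.cast_add_one_ne_zero, mul_comm]
    exact_mod_cast add_one_mul_choose_eq n k
  have alternating : ∑ k ∈ range (n + 1), (-1) ^ k * ((n + 1).choose (k + 1) : K) = 1 := by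
    have vanish : ∑ k ∈ range (n + 2), (-1) ^ k * ((n + 1).choose k : K) = 0 := by
      exact_mod_cast Int.alternating_sum_range_choose_of_ne n.succ_ne_zero
    rw [sum_range_succ'] at vanish
    simp only [pow_succ, mul_neg_one, neg_mul, sum_neg_distrib, pow_zero, choose_zero_right,
      Nat.cast_one, mul_one] at vanish
    linear_combination -vanish
  simp_rw [mul_div_assoc, absorb, ← mul_div_assoc, ← sum_div, alternating]

/-- At `n = 0` both sides vanish, the right one because `(0 : ℚ)⁻¹ = 0`. -/
lemma sum_range_neg_one_pow_succ_mul_choose_mul_harmonic (n : ℕ) :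
    ∑ k ∈ range (n + 1), (-1) ^ (k + 1) * (n.choose k : ℚ) * harmonic k = (n : ℚ)⁻¹ := by
  cases n with
  | zero => simp
  | succ n =>
    have pascal := sum_range_neg_one_pow_mul_choose_succ_mul (fun k => -harmonic k) n
    simp only [harmonic_succ, sub_neg_eq_add, neg_add_cancel_left] at pascal
    calc ∑ k ∈ range (n + 2), (-1) ^ (k + 1) * ((n + 1).choose k : ℚ) * harmonic k
        = ∑ k ∈ range (n + 2), (-1) ^ k * ((n + 1).choose k : ℚ) * -harmonic k :=
          sum_congr rfl fun k _ => by ring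
      _ = ∑ k ∈ range (n + 1), (-1) ^ k * (n.choose k : ℚ) / (k + 1) := by
          rw [pascal]; push_cast; simp only [div_eq_mul_inv]
      _ = ((n + 1 : ℕ) : ℚ)⁻¹ := by
          rw [sum_range_neg_one_pow_mul_choose_div_succ]; push_cast; ring

lemma harmonic_nonneg (n : ℕ) : 0 ≤ harmonic n :=
  sum_nonneg fun _ _ => by positivity

lemma harmonic_le_self (n : ℕ) : harmonic n ≤ n := by
  induction n with
  | zero => simp
  | succ n ih =>
    rw [harmonic_succ, cast_succ]
    gcongr
    exact inv_le_one_of_one_le₀ (by exact_mod_cast n.succ_pos)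

lemma summable_abs_mul_pow_div_factorial {a : ℕ → ℝ} {C : ℝ} (ha : ∀ n, |a n| ≤ C ^ n) (x : ℝ) :
    Summable fun n => |a n * x ^ n / n !| := by
  refine .of_nonneg_of_le (fun n => abs_nonneg _) (fun n => ?_)
    (Real.summable_pow_div_factorial (C * |x|))
  rw [abs_div, abs_mul, abs_pow, Nat.abs_cast, mul_pow]
  gcongr
  exact ha n

lemma sum_range_mul_pow_div_factorial_mul_pow_div_factorial {K : Type*} [Field K] [CharZero K]
    (a : ℕ → K) (x : K) (n : ℕ) :
    ∑ k ∈ range (n + 1), a k * x ^ k / k ! * (x ^ (n - k) / (n - k)!)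
      = (∑ k ∈ range (n + 1), a k * n.choose k) * x ^ n / n ! := by
  rw [sum_mul, sum_div]
  refine sum_congr rfl fun k hk => ?_
  have hkn : k ≤ n := Nat.lt_succ_iff.mp (mem_range.mp hk)
  have hn : (n ! : K) ≠ 0 := cast_ne_zero.mpr n.factorial_ne_zero
  rw [cast_choose K hkn, ← pow_mul_pow_sub x hkn]
  field_simp

theorem stmt_8 (x : ℝ) :
    (Summable fun n : ℕ => |(-1) ^ (n + 1) * (harmonic n : ℝ) * x ^ n / Nat.factorial n|) ∧
    (Summable fun n : ℕ => |x ^ (n + 1) / ((n + 1) * Nat.factorial (n + 1))|) ∧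
    Real.exp x * ∑' n : ℕ, (-1) ^ (n + 1) * (harmonic n : ℝ) * x ^ n / Nat.factorial n
      = ∑' n : ℕ, x ^ (n + 1) / ((n + 1) * Nat.factorial (n + 1)) := by
  set a : ℕ → ℝ := fun n => (-1) ^ (n + 1) * (harmonic n : ℝ)
  have ha : ∀ n, |a n| ≤ 2 ^ n := fun n => by
    rw [abs_mul, abs_pow, abs_neg, abs_one, one_pow, one_mul,
      abs_of_nonneg (by exact_mod_cast harmonic_nonneg n)]
    exact (Rat.cast_le.mpr (harmonic_le_self n)).trans (by exact_mod_cast n.lt_two_pow_self.le)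
  have hg := summable_abs_mul_pow_div_factorial ha x
  have hcoeff (n : ℕ) : ∑ k ∈ range (n + 1), a k * x ^ k / k ! * (x ^ (n - k) / (n - k)!)
      = (n : ℝ)⁻¹ * x ^ n / n ! := by
    rw [sum_range_mul_pow_div_factorial_mul_pow_div_factorial]
    have binomial := congrArg (Rat.cast : ℚ → ℝ)
      (sum_range_neg_one_pow_succ_mul_choose_mul_harmonic n)
    push_cast at binomial
    rw [← binomial, sum_congr rfl fun k _ => mul_right_comm ((-1 : ℝ) ^ (k + 1)) _ _]
  have hc : Summable fun n : ℕ => |(n : ℝ)⁻¹ * x ^ n / n !| :=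
    summable_abs_mul_pow_div_factorial (C := 1) (fun n => by simpa using n.cast_inv_le_one) x
  have hshift (n : ℕ) : ((n + 1 : ℕ) : ℝ)⁻¹ * x ^ (n + 1) / (n + 1)!
      = x ^ (n + 1) / ((n + 1) * (n + 1)!) := by
    rw [cast_succ, inv_mul_eq_div, div_div]
  refine ⟨hg, ?_, ?_⟩
  · exact ((summable_nat_add_iff 1).mpr hc).congr fun n => by rw [hshift]
  · have hexp : Summable fun n => ‖x ^ n / (n ! : ℝ)‖ := by
      simpa [abs_div, abs_pow] using Real.summable_pow_div_factorial |x|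
    rw [Real.exp_eq_exp_ℝ, NormedSpace.exp_eq_tsum_div, mul_comm,
      tsum_mul_tsum_eq_tsum_sum_range_of_summable_norm (by simpa only [Real.norm_eq_abs]) hexp,
      tsum_congr hcoeff, hc.of_abs.tsum_eq_zero_add, tsum_congr hshift, cast_zero, inv_zero,
      zero_mul, zero_div, zero_add]
end

section
/- e · ∑_{n≥0} (-1)^n H_n / n! = ∫₀¹ (1 - e^{1-t})/(1-t) dt. -/
/-!
Write `H_n = ∫₀¹ ∑_{j<n} tʲ dt`. The series `∑ xⁿ/n! · ∑_{j<n} tʲ` is dominated on `[0,1]` by the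
summable constants `n |x|ⁿ / n!`, so it may be integrated termwise; for `t ≠ 1` its sum is
`∑ (xⁿ - (xt)ⁿ)/n! / (1 - t) = (eˣ - eˣᵗ)/(1 - t)`. Take `x = -1` and multiply by `e`.
-/

open Finset Real

theorem harmonic_eq_integral_geom_sum (n : ℕ) :
    (harmonic n : ℝ) = ∫ t in (0 : ℝ)..1, ∑ j ∈ range n, t ^ j := by
  rw [intervalIntegral.integral_finsetSum fun j _ => intervalIntegral.intervalIntegrable_pow j]
  simp [harmonic, integral_pow]

theorem norm_geom_sum_le_of_mem_Icc {t : ℝ} (ht : t ∈ Set.Icc 0 1) (n : ℕ) :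
    ‖∑ j ∈ range n, t ^ j‖ ≤ n := by
  calc ‖∑ j ∈ range n, t ^ j‖ ≤ ∑ j ∈ range n, ‖t ^ j‖ := norm_sum_le _ _
    _ ≤ ∑ _j ∈ range n, (1 : ℝ) := by
      gcongr with j
      rw [norm_pow, norm_of_nonneg ht.1]
      exact pow_le_one₀ ht.1 ht.2
    _ = n := by simp

theorem summable_mul_pow_div_factorial (x : ℝ) :
    Summable fun n : ℕ => n * x ^ n / n.factorial := by
  refine .of_norm_bounded (Real.summable_pow_div_factorial (2 * |x|)) fun n => ?_
  rw [norm_div, norm_mul, mul_pow, norm_pow, Real.norm_natCast, Real.norm_natCast, norm_eq_abs]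
  gcongr
  exact_mod_cast (Nat.lt_two_pow_self).le

theorem hasSum_pow_div_factorial_mul_geom_sum {t : ℝ} (ht : t ≠ 1) (x : ℝ) :
    HasSum (fun n : ℕ => x ^ n / n.factorial * ∑ j ∈ range n, t ^ j)
      ((exp x - exp (x * t)) / (1 - t)) := by
  have hexp (y : ℝ) : HasSum (fun n : ℕ => y ^ n / n.factorial) (exp y) := by
    rw [exp_eq_exp_ℝ]; exact NormedSpace.expSeries_div_hasSum_exp y
  have hterm (n : ℕ) : x ^ n / n.factorial * ∑ j ∈ range n, t ^ j
      = (x ^ n / n.factorial - (x * t) ^ n / n.factorial) / (1 - t) := by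
    have : 1 - t ≠ 0 := sub_ne_zero.2 ht.symm
    rw [geom_sum_eq ht, mul_pow]
    field_simp
    ring
  simpa only [hterm] using ((hexp x).sub (hexp (x * t))).div_const (1 - t)

theorem hasSum_pow_mul_harmonic_div_factorial (x : ℝ) :
    HasSum (fun n : ℕ => x ^ n * harmonic n / n.factorial)
      (∫ t in (0 : ℝ)..1, (exp x - exp (x * t)) / (1 - t)) := by
  have hterm (n : ℕ) : x ^ n * harmonic n / n.factorial
      = ∫ t in (0 : ℝ)..1, x ^ n / n.factorial * ∑ j ∈ range n, t ^ j := by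
    rw [intervalIntegral.integral_const_mul, ← harmonic_eq_integral_geom_sum]
    ring
  simp only [hterm]
  refine intervalIntegral.hasSum_integral_of_dominated_convergence
    (fun n _ => n * |x| ^ n / n.factorial) (fun n => by fun_prop) ?_ ?_ ?_ ?_
  · refine fun n => .of_forall fun t ht => ?_
    rw [Set.uIoc_of_le zero_le_one] at ht
    rw [norm_mul, norm_div, norm_pow, Real.norm_natCast, norm_eq_abs, mul_comm, mul_div_assoc]
    gcongr
    exact norm_geom_sum_le_of_mem_Icc (Set.Ioc_subset_Icc_self ht) n
  · exact .of_forall fun t _ => by simpa using summable_mul_pow_div_factorial |x|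
  · exact intervalIntegrable_const
  · exact (MeasureTheory.volume.ae_ne 1).mono fun t ht _ =>
      hasSum_pow_div_factorial_mul_geom_sum ht x

theorem stmt_10 :
    Real.exp 1 * ∑' n : ℕ, (-1) ^ n * (harmonic n : ℝ) / Nat.factorial n
      = ∫ t in (0:ℝ)..1, (1 - Real.exp (1 - t)) / (1 - t) := by
  rw [(hasSum_pow_mul_harmonic_div_factorial (-1)).tsum_eq, ← intervalIntegral.integral_const_mul]
  congr 1 with t
  rw [mul_div_assoc', mul_sub, ← exp_add, ← exp_add, add_neg_cancel, exp_zero, neg_one_mul,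
    ← sub_eq_add_neg]
end
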